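/- arXiv:1309.4145 — 4 statements merged into one kernel-verified Lean document; each statement's English description precedes it below -/
import Mathlib

section
/- The binary cubic x₀x₁² cannot be written as a ℂ-linear combination a·L³ + b·M³ of cubes of two linear forms L, M ∈ ℂ[x₀,x₁]₁. -/
/-!
Write `L = pX₀ + qX₁` and `M = rX₀ + sX₁`. Comparing the coefficients of `aL³ + bM³` with those
of `X₀X₁²` gives four polynomial equations in `a, b, p, q, r, s`. With `D = ps - qr`, the identities
  `ab·pr·D² = (apq² + brs²)(ap³ + br³) - (ap²q + br²s)²`,
  `ab·qs·D² = (aq³ + bs³)(ap²q + br²s) - (apq² + brs²)²`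
turn them into `abprD² = 0` and `9abqsD² = -1`. Hence `a, b, D ≠ 0` and `pr = 0`; but `p = 0`
(resp. `r = 0`) together with the `X₀³`-equation forces `r = 0` (resp. `p = 0`), so `D = 0`.
-/

open MvPolynomial

namespace MvPolynomial

variable {R : Type*} [CommSemiring R]

theorem IsHomogeneous.eq_sum_C_coeff_mul_X {σ : Type*} [Fintype σ] {φ : MvPolynomial σ R}
    (hφ : φ.IsHomogeneous 1) : φ = ∑ i, C (coeff (Finsupp.single i 1) φ) * X i := by
  classical
  ext d
  simp only [coeff_sum, coeff_C_mul, coeff_X, mul_ite, mul_one, mul_zero]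
  by_cases hd : d.degree = 1
  · obtain ⟨i, rfl⟩ := (Finsupp.sum_eq_one_iff d).mp hd
    simp [Finsupp.single_left_inj one_ne_zero]
  · rw [hφ.coeff_eq_zero hd, eq_comm]
    refine Finset.sum_eq_zero fun i _ => if_neg ?_
    rintro rfl
    simp at hd

noncomputable def binaryForm (n : ℕ) (c : Fin (n + 1) → R) : MvPolynomial (Fin 2) R :=
  ∑ i, C (c i) * X 0 ^ (i : ℕ) * X 1 ^ (n - i)

theorem coeff_binaryForm (n : ℕ) (c : Fin (n + 1) → R) (j : Fin (n + 1)) :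
    coeff (Finsupp.single 0 (j : ℕ) + Finsupp.single 1 (n - j)) (binaryForm n c) = c j := by
  classical
  have hinj : ∀ i : Fin (n + 1), Finsupp.single (0 : Fin 2) (i : ℕ) + Finsupp.single 1 (n - i) =
      Finsupp.single 0 (j : ℕ) + Finsupp.single 1 (n - j) ↔ i = j := by
    intro i
    refine ⟨fun h => Fin.ext ?_, by rintro rfl; rfl⟩
    simpa using congrArg (· 0) h
  simp only [binaryForm, coeff_sum, X_pow_eq_monomial, monomial_mul, mul_one,
    C_mul_monomial, coeff_monomial, hinj]
  simp

theorem binaryForm_three (c : Fin 4 → R) :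
    binaryForm 3 c = C (c 0) * X 1 ^ 3 + C (c 1) * X 0 * X 1 ^ 2 + C (c 2) * X 0 ^ 2 * X 1
      + C (c 3) * X 0 ^ 3 := by
  simp [binaryForm, Fin.sum_univ_four]

theorem binaryForm_injective (n : ℕ) : Function.Injective (binaryForm (R := R) n) :=
  fun c d h => _root_.funext fun j => by
    rw [← coeff_binaryForm n c j, h, coeff_binaryForm]

end MvPolynomial

theorem sum_two_cubes_coeffs_ne {R : Type*} [CommRing R] [IsDomain R] (a b p q r s : R) :
    ![a * q ^ 3 + b * s ^ 3, 3 * (a * p * q ^ 2 + b * r * s ^ 2),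
      3 * (a * p ^ 2 * q + b * r ^ 2 * s), a * p ^ 3 + b * r ^ 3] ≠ ![0, 1, 0, 0] := by
  intro h
  obtain ⟨h₀, h₁, h₂, h₃⟩ : _ ∧ _ ∧ _ ∧ _ := by
    simpa only [funext_iff, Fin.forall_fin_succ, Matrix.cons_val_zero, Matrix.cons_val_succ,
      IsEmpty.forall_iff, and_true] using h
  have h₂' : a * p ^ 2 * q + b * r ^ 2 * s = 0 := by
    linear_combination (a * p * q ^ 2 + b * r * s ^ 2) * h₂ - (a * p ^ 2 * q + b * r ^ 2 * s) * h₁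
  have hpr : a * b * p * r * (p * s - q * r) ^ 2 = 0 := by
    linear_combination (a * p * q ^ 2 + b * r * s ^ 2) * h₃ - (a * p ^ 2 * q + b * r ^ 2 * s) * h₂'
  have hqs : 9 * (a * b * q * s * (p * s - q * r) ^ 2) = -1 := by
    linear_combination 9 * (a * p ^ 2 * q + b * r ^ 2 * s) * h₀
      - (3 * (a * p * q ^ 2 + b * r * s ^ 2) + 1) * h₁
  have ha : a ≠ 0 := by rintro rfl; simp at hqs
  have hb : b ≠ 0 := by rintro rfl; simp at hqs
  have hD : p * s - q * r ≠ 0 := by intro hD; simp [hD] at hqs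
  rcases mul_eq_zero.mp (by simpa [ha, hb, hD] using hpr : p * r = 0) with rfl | rfl
  · have : r = 0 := by simpa [hb] using h₃
    simp [this] at hD
  · have : p = 0 := by simpa [ha] using h₃
    simp [this] at hD

theorem x0x1sq_not_sum_of_two_cubes (L M : MvPolynomial (Fin 2) ℂ)
    (hL : L.IsHomogeneous 1) (hM : M.IsHomogeneous 1) (a b : ℂ) :
    X 0 * X 1 ^ 2 ≠ C a * L ^ 3 + C b * M ^ 3 := by
  obtain ⟨p, q, rfl⟩ : ∃ p q, L = C p * X 0 + C q * X 1 :=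
    ⟨_, _, by simpa [Fin.sum_univ_two] using hL.eq_sum_C_coeff_mul_X⟩
  obtain ⟨r, s, rfl⟩ : ∃ r s, M = C r * X 0 + C s * X 1 :=
    ⟨_, _, by simpa [Fin.sum_univ_two] using hM.eq_sum_C_coeff_mul_X⟩
  have hlhs : (X 0 * X 1 ^ 2 : MvPolynomial (Fin 2) ℂ) = binaryForm 3 ![0, 1, 0, 0] := by
    simp [binaryForm_three]
  have hrhs : C a * (C p * X 0 + C q * X 1) ^ 3 + C b * (C r * X 0 + C s * X 1) ^ 3 =
      binaryForm 3 ![a * q ^ 3 + b * s ^ 3, 3 * (a * p * q ^ 2 + b * r * s ^ 2),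
        3 * (a * p ^ 2 * q + b * r ^ 2 * s), a * p ^ 3 + b * r ^ 3] := by
    simp only [binaryForm_three, Matrix.cons_val, map_add, map_mul, map_pow, map_ofNat C]
    ring
  rw [hlhs, hrhs]
  exact fun h => sum_two_cubes_coeffs_ne a b p q r s (binaryForm_injective 3 h).symm
end

section
/- With φ_T as above, if T = a ⊗ b ⊗ c is a rank-one tensor in ℂ³ ⊗ ℂ³ ⊗ ℂ³, then the 9×9 matrix φ_T has rank at most 2. -/
/-- Ottaviani's matrix `φ_T` built from the first-factor slices `T¹ = T 0`,
`T² = T 1`, `T³ = T 2` of a tensor `T ∈ ℂ³⊗ℂ³⊗ℂ³`, as the 9×9 block matrix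
with block rows `(0, T¹, -T²)`, `(-T¹, 0, T³)`, `(T², -T³, 0)`. -/
def phi (T : Fin 3 → Matrix (Fin 3) (Fin 3) ℂ) :
    Matrix (Fin 3 × Fin 3) (Fin 3 × Fin 3) ℂ :=
  Matrix.of fun p q =>
    (![![0, T 0, -(T 1)], ![-(T 0), 0, T 2], ![T 1, -(T 2), 0]] p.1 q.1) p.2 q.2

lemma rank_le_two_of_factor (P : Matrix (Fin 3 × Fin 3) (Fin 3 × Fin 3) ℂ)
    (A : Matrix (Fin 3 × Fin 3) (Fin 2) ℂ) (B : Matrix (Fin 2) (Fin 3 × Fin 3) ℂ)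
    (h : P = A * B) : P.rank ≤ 2 := by
  rw [h]
  exact le_trans (Matrix.rank_mul_le_left A B) (by simpa using A.rank_le_card_width)

theorem phi_rank_one_rank_le_two (a b c : Fin 3 → ℂ)
    (T : Fin 3 → Matrix (Fin 3) (Fin 3) ℂ)
    (hT : ∀ i, T i = a i • Matrix.vecMulVec b c) :
    (phi T).rank ≤ 2 := by
  by_cases h0 : a 0 = 0
  · by_cases h1 : a 1 = 0
    · by_cases h2 : a 2 = 0
      · -- a = 0, phi T = 0
        have : phi T = 0 := by
          ext ⟨i, j⟩ ⟨k, l⟩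
          fin_cases i <;> fin_cases k <;>
            simp [phi, hT, h0, h1, h2]
        rw [this]
        simp [Matrix.rank_zero]
      · -- a 2 ≠ 0 : columns 1,2 of M span
        refine rank_le_two_of_factor _
          (Matrix.of fun p s => ![![a 0, -(a 1)], ![0, a 2], ![-(a 2), 0]] p.1 s * b p.2)
          (Matrix.of fun s q => ![![-(a 1) / a 2, 1, 0], ![-(a 0) / a 2, 0, 1]] s q.1 * c q.2) ?_
        ext ⟨i, j⟩ ⟨k, l⟩
        fin_cases i <;> fin_cases k <;>
          simp [phi, hT, Matrix.mul_apply, Fin.sum_univ_two, Matrix.vecMulVec_apply] <;>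
          (try field_simp) <;> ring
    · -- a 1 ≠ 0 : columns 0,2 of M span
      refine rank_le_two_of_factor _
        (Matrix.of fun p s => ![![0, -(a 1)], ![-(a 0), a 2], ![a 1, 0]] p.1 s * b p.2)
        (Matrix.of fun s q => ![![1, -(a 2) / a 1, 0], ![0, -(a 0) / a 1, 1]] s q.1 * c q.2) ?_
      ext ⟨i, j⟩ ⟨k, l⟩
      fin_cases i <;> fin_cases k <;>
        simp [phi, hT, Matrix.mul_apply, Fin.sum_univ_two, Matrix.vecMulVec_apply] <;>
        (try field_simp) <;> ring
  · -- a 0 ≠ 0 : columns 0,1 of M span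
    refine rank_le_two_of_factor _
      (Matrix.of fun p s => ![![0, a 0], ![-(a 0), 0], ![a 1, -(a 2)]] p.1 s * b p.2)
      (Matrix.of fun s q => ![![1, 0, -(a 2) / a 0], ![0, 1, -(a 1) / a 0]] s q.1 * c q.2) ?_
    ext ⟨i, j⟩ ⟨k, l⟩
    fin_cases i <;> fin_cases k <;>
      simp [phi, hT, Matrix.mul_apply, Fin.sum_univ_two, Matrix.vecMulVec_apply] <;>
      (try field_simp) <;> ring
end

section
/- With φ_T as above, if a tensor T ∈ ℂ³ ⊗ ℂ³ ⊗ ℂ³ can be written as a sum of r rank-one tensors, then the matrix φ_T has rank at most 2r. In particular, if T is a sum of 4 rank-one tensors then det(φ_T) = 0. -/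
/-!
`φ_T` depends additively on `T`, and for a rank-one tensor `a ⊗ b ⊗ c` it is the Kronecker
product of the 3×3 skew-symmetric matrix built from `a` with the rank-one matrix `b cᵀ`.
A skew-symmetric 3×3 matrix is singular, so has rank at most 2, and hence each rank-one
summand of `T` contributes at most 2 to the rank of `φ_T`. For `r = 4` this gives
`rank φ_T ≤ 8 < 9`.
-/

open Matrix Module
open scoped Kronecker

namespace Matrix

section Field

variable {K : Type*} [Field K] {m n : Type*} [Fintype n]

theorem rank_add_le (A B : Matrix m n K) : (A + B).rank ≤ A.rank + B.rank :=
  calc finrank K (LinearMap.range (A + B).mulVecLin)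
      ≤ finrank K ↥(LinearMap.range A.mulVecLin ⊔ LinearMap.range B.mulVecLin) := by
        refine Submodule.finrank_mono ?_
        rintro _ ⟨v, rfl⟩
        rw [mulVecLin_add]
        exact Submodule.add_mem_sup ⟨v, rfl⟩ ⟨v, rfl⟩
    _ ≤ _ := Submodule.finrank_add_le_finrank_add_finrank _ _

theorem rank_sum_le {ι : Type*} (s : Finset ι) (A : ι → Matrix m n K) :
    (∑ i ∈ s, A i).rank ≤ ∑ i ∈ s, (A i).rank :=
  Finset.le_sum_of_subadditive rank (rank_zero (R := K)).le rank_add_le s A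

theorem rank_lt_card_of_det_eq_zero [DecidableEq n] {A : Matrix n n K} (h : A.det = 0) :
    A.rank < Fintype.card n := by
  refine (rank_le_card_width A).lt_of_ne fun hfull => ?_
  have hrange : LinearMap.range A.mulVecLin = ⊤ :=
    Submodule.eq_top_of_finrank_eq (by rw [← rank, hfull, finrank_fintype_fun_eq_card])
  have hunit := mulVec_surjective_iff_isUnit.mp (LinearMap.range_eq_top.mp hrange)
  rw [isUnit_iff_isUnit_det, h] at hunit
  exact not_isUnit_zero hunit

end Field

theorem rank_kronecker_vecMulVec_le {R : Type*} [CommSemiring R] [StrongRankCondition R]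
    {l m n p : Type*} [Fintype l] [Fintype m] [Fintype n] [Fintype p]
    [DecidableEq l] [DecidableEq m] [DecidableEq n] [DecidableEq p]
    (A : Matrix l m R) (b : n → R) (c : p → R) :
    (A ⊗ₖ vecMulVec b c).rank ≤ A.rank := by
  have hfactor : A ⊗ₖ vecMulVec b c =
      diagonal (fun i : l × n => b i.2) *
        A.submatrix (Prod.fst : l × n → l) (Prod.fst : m × p → m) *
        diagonal (fun j : m × p => c j.2) := by
    ext ⟨i, i'⟩ ⟨j, j'⟩
    simp only [kroneckerMap_apply, vecMulVec_apply, mul_diagonal, diagonal_mul, submatrix_apply]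
    ring
  rw [hfactor]
  exact (rank_mul_le_left _ _).trans ((rank_mul_le_right _ _).trans (rank_submatrix_le _ _ _))

end Matrix

def skewPattern {R : Type*} [Zero R] [Neg R] (a : Fin 3 → R) : Matrix (Fin 3) (Fin 3) R :=
  !![0, a 0, -a 1; -a 0, 0, a 2; a 1, -a 2, 0]

theorem skewPattern_add {R : Type*} [AddCommGroup R] (a a' : Fin 3 → R) :
    skewPattern (a + a') = skewPattern a + skewPattern a' := by
  ext i j
  fin_cases i <;> fin_cases j <;> simp [skewPattern, add_comm]

theorem skewPattern_smul_const {R M : Type*} [Ring R] [AddCommGroup M] [Module R M]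
    (a : Fin 3 → R) (x : M) :
    skewPattern (fun i => a i • x) = (skewPattern a).map (· • x) := by
  ext i j
  fin_cases i <;> fin_cases j <;> simp [skewPattern]

theorem det_skewPattern {R : Type*} [CommRing R] (a : Fin 3 → R) : (skewPattern a).det = 0 := by
  rw [skewPattern, det_fin_three]
  simp only [of_apply, cons_val', cons_val_zero, cons_val_fin_one, cons_val_one, cons_val,
    empty_val', mul_zero, zero_mul, mul_neg, neg_mul, neg_neg, neg_zero, sub_self, zero_add,
    sub_zero]
  ring

theorem rank_skewPattern_le {K : Type*} [Field K] (a : Fin 3 → K) : (skewPattern a).rank ≤ 2 :=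
  Nat.le_of_lt_succ (by simpa using rank_lt_card_of_det_eq_zero (det_skewPattern a))

theorem phi_eq_comp (T : Fin 3 → Matrix (Fin 3) (Fin 3) ℂ) :
    phi T = comp _ _ _ _ ℂ (skewPattern T) :=
  rfl

theorem phi_add (T T' : Fin 3 → Matrix (Fin 3) (Fin 3) ℂ) : phi (T + T') = phi T + phi T' := by
  simp only [phi_eq_comp, skewPattern_add]
  exact map_add (compAddEquiv _ _ _ _ ℂ) _ _

theorem phi_sum {ι : Type*} (s : Finset ι) (T : ι → Fin 3 → Matrix (Fin 3) (Fin 3) ℂ) :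
    phi (∑ k ∈ s, T k) = ∑ k ∈ s, phi (T k) :=
  map_sum (AddMonoidHom.mk' phi phi_add) T s

theorem phi_smul_vecMulVec (a b c : Fin 3 → ℂ) :
    phi (fun i => a i • vecMulVec b c) = skewPattern a ⊗ₖ vecMulVec b c := by
  rw [phi_eq_comp, skewPattern_smul_const]
  ext ⟨i, k⟩ ⟨j, l⟩
  simp

theorem phi_rank_of_sum_of_rank_ones (r : ℕ) (a b c : Fin r → Fin 3 → ℂ)
    (T : Fin 3 → Matrix (Fin 3) (Fin 3) ℂ)
    (hT : ∀ i, T i = ∑ s, a s i • Matrix.vecMulVec (b s) (c s)) :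
    (phi T).rank ≤ 2 * r ∧ (r = 4 → (phi T).det = 0) := by
  have hT' : T = ∑ s, fun i => a s i • vecMulVec (b s) (c s) := by
    ext1 i
    rw [hT, Finset.sum_apply]
  have hrank : (phi T).rank ≤ 2 * r :=
    calc (phi T).rank
        ≤ ∑ s, (skewPattern (a s) ⊗ₖ vecMulVec (b s) (c s)).rank := by
          simpa only [hT', phi_sum, phi_smul_vecMulVec] using rank_sum_le _ _
      _ ≤ ∑ s, (skewPattern (a s)).rank :=
          Finset.sum_le_sum fun s _ => rank_kronecker_vecMulVec_le _ _ _
      _ ≤ ∑ _s : Fin r, 2 := Finset.sum_le_sum fun s _ => rank_skewPattern_le _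
      _ = 2 * r := by simp [mul_comm]
  refine ⟨hrank, fun hr => ?_⟩
  by_contra hdet
  have hfull : (phi T).rank = 9 := by simpa using rank_of_det_ne_zero hdet
  omega
end

section
/- Apolarity Lemma (one direction): if F ∈ ℂ[x₀,…,xₙ]_d can be written F = L₁^d + … + L_s^d with the L_i pairwise non-proportional linear forms, then the homogeneous ideal I of the set of s points [L₁],…,[L_s] ∈ ℙⁿ (under the identification of linear forms with points) satisfies I ⊆ F^⊥. -/
open MvPolynomial

/-- The differential operator on `ℂ[x₀,…,xₙ]` associated to a polynomial
`p ∈ ℂ[y₀,…,yₙ]`: each variable `yᵢ` acts as `∂/∂xᵢ`. -/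
noncomputable def diffOp {m : ℕ} (p : MvPolynomial (Fin m) ℂ) :
    Module.End ℂ (MvPolynomial (Fin m) ℂ) :=
  (AddMonoidAlgebra.coeff p).sum fun a c =>
    c • (List.ofFn fun i : Fin m =>
      ((pderiv i : Derivation ℂ (MvPolynomial (Fin m) ℂ) (MvPolynomial (Fin m) ℂ)).toLinearMap :
        Module.End ℂ (MvPolynomial (Fin m) ℂ)) ^ a i).prod

/-- The homogeneous ideal of the point `[a₀ : … : aₙ] ∈ ℙⁿ`, generated by the
linear forms `aⱼ yₖ - aₖ yⱼ`. -/
noncomputable def pointIdeal {m : ℕ} (a : Fin m → ℂ) :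
    Ideal (MvPolynomial (Fin m) ℂ) :=
  Ideal.span {q | ∃ j k : Fin m, q = C (a j) * X k - C (a k) * X j}

/-!
For a linear form `L = ∑ bₗ xₗ`, a generator `bⱼ yₖ - bₖ yⱼ` of the ideal of the point `[L]` sends
`L^d` to `d L^(d-1) (bⱼ bₖ - bₖ bⱼ) = 0`. Since differentiation makes `ℂ[x]` a module over
`ℂ[y]`, the annihilator `(L^d)^⊥` is an ideal, so it contains the whole ideal of `[L]`. The
intersection of the ideals of the points `[Lᵢ]` therefore kills every `Lᵢ^d`, hence their sum `F`.
-/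

open scoped IsMulCommutative

namespace MvPolynomial

section CommSemiring

variable {R σ : Type*} [CommSemiring R]

theorem pderiv_pderiv_comm (i j : σ) (p : MvPolynomial σ R) :
    pderiv i (pderiv j p) = pderiv j (pderiv i p) := by
  classical
  induction p using MvPolynomial.induction_on with
  | C c => simp
  | add p q hp hq => simp [hp, hq]
  | mul_X p k hp =>
    simp only [pderiv_mul, map_add, hp]
    by_cases hik : i = k <;> by_cases hjk : j = k <;>
      simp [hik, hjk, Ne.symm]

variable (R σ) in
/-- `aeval` needs a commutative target, so the partial derivatives are first collected in the
commutative subalgebra they generate. -/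
noncomputable abbrev pderivSubalgebra : Subalgebra R (Module.End R (MvPolynomial σ R)) :=
  Algebra.adjoin R (Set.range fun i : σ => ((pderiv i).toLinearMap : Module.End R _))

instance : IsMulCommutative (pderivSubalgebra R σ) :=
  Algebra.isMulCommutative_adjoin R <| by
    rintro _ ⟨i, rfl⟩ _ ⟨j, rfl⟩
    show (pderiv i).toLinearMap * (pderiv j).toLinearMap =
      (pderiv j).toLinearMap * (pderiv i).toLinearMap
    exact LinearMap.ext fun p => pderiv_pderiv_comm i j p

noncomputable def pderivAlgHom : MvPolynomial σ R →ₐ[R] Module.End R (MvPolynomial σ R) :=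
  (pderivSubalgebra R σ).val.comp <|
    aeval fun i => ⟨(pderiv i).toLinearMap, Algebra.subset_adjoin ⟨i, rfl⟩⟩

theorem pderivAlgHom_X (i : σ) :
    pderivAlgHom (X i : MvPolynomial σ R) = (pderiv i).toLinearMap := by
  simp [pderivAlgHom]

theorem pderivAlgHom_C_mul_X_apply (c : R) (i : σ) (f : MvPolynomial σ R) :
    pderivAlgHom (C c * X i) f = C c * pderiv i f := by
  rw [← smul_eq_C_mul, ← smul_eq_C_mul, map_smul, pderivAlgHom_X]
  rfl

/-- The apolar ideal `F^⊥`. -/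
def apolarIdeal (F : MvPolynomial σ R) : Ideal (MvPolynomial σ R) where
  carrier := {p | pderivAlgHom p F = 0}
  add_mem' {p q} hp hq := by simp_all
  zero_mem' := by simp
  smul_mem' r p hp := by simp_all [smul_eq_mul, map_mul]

theorem mem_apolarIdeal {F p : MvPolynomial σ R} : p ∈ apolarIdeal F ↔ pderivAlgHom p F = 0 :=
  Iff.rfl

theorem iInf_apolarIdeal_le_apolarIdeal_sum {ι : Type*} [Fintype ι]
    (F : ι → MvPolynomial σ R) : ⨅ i, apolarIdeal (F i) ≤ apolarIdeal (∑ i, F i) := by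
  intro p hp
  simp only [Submodule.mem_iInf, mem_apolarIdeal] at hp
  rw [mem_apolarIdeal, map_sum]
  exact Finset.sum_eq_zero fun i _ => hp i

theorem pderiv_linearForm [Fintype σ] (b : σ → R) (k : σ) :
    pderiv k (∑ l, C (b l) * X l) = C (b k) := by
  classical
  rw [map_sum, Finset.sum_eq_single k (fun l _ hl => by simp [pderiv_X_of_ne hl]) (by simp)]
  simp

end CommSemiring

theorem C_mul_X_sub_C_mul_X_mem_apolarIdeal_linearForm_pow {R σ : Type*} [CommRing R] [Fintype σ]
    (b : σ → R) (j k : σ) (d : ℕ) :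
    C (b j) * X k - C (b k) * X j ∈ apolarIdeal ((∑ l, C (b l) * X l) ^ d) := by
  -- both terms equal `d bⱼ bₖ L^(d-1)`
  rw [mem_apolarIdeal, map_sub, LinearMap.sub_apply, pderivAlgHom_C_mul_X_apply,
    pderivAlgHom_C_mul_X_apply, Derivation.leibniz_pow, Derivation.leibniz_pow,
    pderiv_linearForm, pderiv_linearForm]
  simp only [nsmul_eq_mul, smul_eq_mul]
  ring

end MvPolynomial

theorem diffOp_eq_pderivAlgHom {m : ℕ} (p : MvPolynomial (Fin m) ℂ) :
    diffOp p = pderivAlgHom p := by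
  induction p using MvPolynomial.induction_on' with
  | monomial u c =>
    rw [diffOp, MvPolynomial.sum_monomial_eq (by simp), monomial_eq, ← smul_eq_C_mul,
      Finsupp.prod_fintype _ _ (by simp), ← List.prod_ofFn, map_smul, map_list_prod,
      List.map_ofFn]
    simp only [Function.comp_def, map_pow, pderivAlgHom_X]
  | add p q hp hq =>
    have hadd : diffOp (p + q) = diffOp p + diffOp q :=
      Finsupp.sum_add_index (by simp) (by intros; rw [add_smul])
    rw [hadd, hp, hq, map_add]

theorem pointIdeal_le_apolarIdeal_linearForm_pow {m : ℕ} (b : Fin m → ℂ) (d : ℕ) :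
    pointIdeal b ≤ apolarIdeal ((∑ l, C (b l) * X l) ^ d) :=
  Ideal.span_le.2 fun _ ⟨j, k, hq⟩ => hq ▸ C_mul_X_sub_C_mul_X_mem_apolarIdeal_linearForm_pow b j k d

theorem apolarity_lemma_forward_general (n s d : ℕ)
    (a : Fin s → Fin (n + 1) → ℂ)
    (F : MvPolynomial (Fin (n + 1)) ℂ)
    (hF : F = ∑ i, (∑ j, C (a i j) * X j) ^ d) :
    ∀ p ∈ ⨅ i : Fin s, pointIdeal (a i), diffOp p F = 0 := by
  intro p hp
  rw [diffOp_eq_pderivAlgHom, ← mem_apolarIdeal, hF]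
  exact iInf_apolarIdeal_le_apolarIdeal_sum _
    (iInf_mono (fun i => pointIdeal_le_apolarIdeal_linearForm_pow (a i) d) hp)

theorem apolarity_lemma_forward (n s d : ℕ)
    (a : Fin s → Fin (n + 1) → ℂ) (ha : ∀ i, a i ≠ 0)
    (hprop : ∀ i j : Fin s, i ≠ j → ∀ c : ℂ, a i ≠ c • a j)
    (F : MvPolynomial (Fin (n + 1)) ℂ)
    (hF : F = ∑ i, (∑ j, C (a i j) * X j) ^ d) :
    ∀ p ∈ ⨅ i : Fin s, pointIdeal (a i), diffOp p F = 0 :=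
  apolarity_lemma_forward_general n s d a F hF
end
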